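/- If a d-ISLP of size g generates a string T of length n ≥ 2, then there exists a d'-ISLP of size at most g generating T for some integer d' with d' ≤ log₂ n. -/
import Mathlib


/-- Rules of an iterated SLP over alphabet `α` with variables `Fin N`. -/
inductive ISLPRule (α : Type) (N : ℕ) : Type
  | term (a : α)
  | pair (B C : Fin N)
  | iter (k1 k2 : ℕ) (Bs : List (Fin N × ℕ))

namespace ISLPRule

variable {α : Type} {N : ℕ}

/-- Variables occurring in the right-hand side of a rule. -/
def vars : ISLPRule α N → List (Fin N)
  | .term _ => []
  | .pair B C => [B, C]
  | .iter _ _ Bs => Bs.map Prod.fst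

/-- The size of a rule: 1 for `A → a`, 2 for `A → BC`, `2 + 2t` for iteration rules. -/
def size : ISLPRule α N → ℕ
  | .term _ => 1
  | .pair _ _ => 2
  | .iter _ _ Bs => 2 + 2 * Bs.length

/-- Validity of a rule in a `d`-ISLP: in iteration rules, `k1, k2 ≥ 1`,
`t ≥ 1` and all exponents `c_j` satisfy `c_j ≤ d`. -/
def Ok (d : ℕ) : ISLPRule α N → Prop
  | .term _ => True
  | .pair _ _ => True
  | .iter k1 k2 Bs => 1 ≤ k1 ∧ 1 ≤ k2 ∧ Bs ≠ [] ∧ ∀ p ∈ Bs, p.2 ≤ d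

/-- A rule is an SLP rule if it is of the form `A → a` or `A → BC`. -/
def isSLP : ISLPRule α N → Prop
  | .term _ => True
  | .pair _ _ => True
  | .iter _ _ _ => False

end ISLPRule

/-- `w` repeated `k` times, i.e. `w^k`. -/
def repList {α : Type} (w : List α) (k : ℕ) : List α := (List.replicate k w).flatten

/-- The list `k1, k1±1, …, k2` (increasing if `k1 ≤ k2`, decreasing if `k1 > k2`). -/
def rangeK (k1 k2 : ℕ) : List ℕ :=
  if k1 ≤ k2 then (List.range (k2 + 1 - k1)).map (k1 + ·)
  else (List.range (k1 + 1 - k2)).map (k1 - ·)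

/-- Expansion of one block `w_1^{i^{c_1}} ⋯ w_t^{i^{c_t}}`, where
`ps = [(w_1, c_1), …, (w_t, c_t)]`. -/
def iterBlock {α : Type} (ps : List (List α × ℕ)) (i : ℕ) : List α :=
  (ps.map (fun p => repList p.1 (i ^ p.2))).flatten

/-- Expansion of `∏_{i=k1}^{k2} w_1^{i^{c_1}} ⋯ w_t^{i^{c_t}}`. -/
def iterExpand {α : Type} (k1 k2 : ℕ) (ps : List (List α × ℕ)) : List α :=
  ((rangeK k1 k2).map (iterBlock ps)).flatten

/-- A `d`-ISLP: variables `Fin N`, exactly one valid rule per variable, a start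
variable, and acyclicity (variables are topologically ordered: every variable
occurring in the rule of `A` is smaller than `A`). -/
structure ISLP (α : Type) (d : ℕ) : Type where
  N : ℕ
  rule : Fin N → ISLPRule α N
  start : Fin N
  ok : ∀ A, (rule A).Ok d
  acyclic : ∀ A, ∀ B ∈ (rule A).vars, B < A

namespace ISLP

/-- `Expands rule A w` holds iff the (unique) expansion of variable `A` is `w`. -/
inductive Expands {α : Type} {N : ℕ} (rule : Fin N → ISLPRule α N) : Fin N → List α → Prop
  | term {A : Fin N} {a : α} : rule A = .term a → Expands rule A [a]
  | pair {A B C : Fin N} {u v : List α} : rule A = .pair B C →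
      Expands rule B u → Expands rule C v → Expands rule A (u ++ v)
  | iter {A : Fin N} {k1 k2 : ℕ} {Bs : List (Fin N × ℕ)} {ps : List (List α × ℕ)} :
      rule A = .iter k1 k2 Bs →
      ps.map Prod.snd = Bs.map Prod.snd →
      (∀ q ∈ Bs.zip ps, Expands rule q.1.1 q.2.1) →
      Expands rule A (iterExpand k1 k2 ps)

variable {α : Type} {d : ℕ}

/-- The ISLP `G` generates the string `T`. -/
def Generates (G : ISLP α d) (T : List α) : Prop := Expands G.rule G.start T

/-- The size of an ISLP: the sum of the sizes of its rules. -/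
def size (G : ISLP α d) : ℕ := ∑ A : Fin G.N, (G.rule A).size

end ISLP

/-- `g_{it(d)}(T)`: the minimum size of a `d`-ISLP generating `T`. -/
noncomputable def gIt (α : Type) (d : ℕ) (T : List α) : ℕ :=
  sInf {g : ℕ | ∃ G : ISLP α d, G.Generates T ∧ G.size = g}

section Aux

variable {α : Type} {N d : ℕ}

lemma mem_rangeK_self (k1 k2 : ℕ) : k1 ∈ rangeK k1 k2 := by
  unfold rangeK; split
  · exact List.mem_map.2 ⟨0, List.mem_range.2 (by omega), by omega⟩
  · exact List.mem_map.2 ⟨0, List.mem_range.2 (by omega), by omega⟩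

lemma mem_rangeK_max (k1 k2 : ℕ) : max k1 k2 ∈ rangeK k1 k2 := by
  unfold rangeK; split
  · exact List.mem_map.2 ⟨k2 - k1, List.mem_range.2 (by omega), by omega⟩
  · exact List.mem_map.2 ⟨0, List.mem_range.2 (by omega), by omega⟩

lemma rangeK_one_one : rangeK 1 1 = [1] := by decide

lemma length_repList (w : List α) (k : ℕ) : (repList w k).length = k * w.length := by
  simp [repList]

lemma le_length_iterBlock {ps : List (List α × ℕ)} {q : List α × ℕ} (hq : q ∈ ps)
    {i : ℕ} : i ^ q.2 * q.1.length ≤ (iterBlock ps i).length := by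
  have : (iterBlock ps i).length = (ps.map (fun p => i ^ p.2 * p.1.length)).sum := by
    simp only [iterBlock, List.length_flatten, List.map_map]
    congr 1
    exact List.map_congr_left (fun p _ => by simp [length_repList, Function.comp])
  rw [this]
  exact List.single_le_sum (fun x _ => Nat.zero_le x) _
    (List.mem_map.2 ⟨q, hq, rfl⟩)

lemma le_length_iterExpand {ps : List (List α × ℕ)} {q : List α × ℕ} (hq : q ∈ ps)
    {k1 k2 i : ℕ} (hi : i ∈ rangeK k1 k2) :
    i ^ q.2 * q.1.length ≤ (iterExpand k1 k2 ps).length := by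
  have h1 : (iterExpand k1 k2 ps).length
      = ((rangeK k1 k2).map (fun j => (iterBlock ps j).length)).sum := by
    simp only [iterExpand, List.length_flatten, List.map_map]
    rfl
  rw [h1]
  exact le_trans (le_length_iterBlock hq)
    (List.single_le_sum (fun x _ => Nat.zero_le x) _ (List.mem_map.2 ⟨i, hi, rfl⟩))

lemma expands_length_pos {rule : Fin N → ISLPRule α N} (ok : ∀ A, (rule A).Ok d)
    {A : Fin N} {w : List α} (h : ISLP.Expands rule A w) : 1 ≤ w.length := by
  induction h with
  | term hA => simp
  | pair hA hu hv ihu ihv => simp only [List.length_append]; omega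
  | @iter A k1 k2 Bs ps hA hsnd hall ih =>
    have hok := ok A
    rw [hA] at hok
    obtain ⟨hk1, hk2, hBs, hcd⟩ := hok
    have hlen : ps.length = Bs.length := by
      have := congrArg List.length hsnd; simpa using this
    have hzne : Bs.zip ps ≠ [] := by
      intro h0
      have := congrArg List.length h0
      simp [List.length_zip, hlen] at this
      exact hBs this
    obtain ⟨q, hq⟩ := List.exists_mem_of_ne_nil _ hzne
    have hq2 : q.2 ∈ ps := (List.of_mem_zip hq).2
    have h1 : 1 ≤ q.2.1.length := ih q hq
    have := le_length_iterExpand hq2 (mem_rangeK_self k1 k2)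
    have hpow : 1 ≤ k1 ^ q.2.2 := Nat.one_le_pow _ _ (by omega)
    calc 1 ≤ k1 ^ q.2.2 * q.2.1.length := Nat.one_le_iff_ne_zero.2 (by positivity)
      _ ≤ _ := this

/-- Clamp every exponent of an iteration rule to at most `d'`. -/
def clampRule (d' : ℕ) : ISLPRule α N → ISLPRule α N
  | .term a => .term a
  | .pair B C => .pair B C
  | .iter k1 k2 Bs => .iter k1 k2 (Bs.map fun p => (p.1, min p.2 d'))

lemma clampRule_vars (d' : ℕ) (r : ISLPRule α N) : (clampRule d' r).vars = r.vars := by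
  cases r with
  | term a => rfl
  | pair B C => rfl
  | iter k1 k2 Bs => simp [clampRule, ISLPRule.vars, List.map_map, Function.comp]

lemma clampRule_size (d' : ℕ) (r : ISLPRule α N) : (clampRule d' r).size = r.size := by
  cases r with
  | term a => rfl
  | pair B C => rfl
  | iter k1 k2 Bs => simp [clampRule, ISLPRule.size]

lemma clampRule_ok (d' : ℕ) {r : ISLPRule α N} (h : r.Ok d) : (clampRule d' r).Ok d' := by
  cases r with
  | term a => trivial
  | pair B C => trivial
  | iter k1 k2 Bs =>
    obtain ⟨hk1, hk2, hBs, _⟩ := h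
    refine ⟨hk1, hk2, ?_, ?_⟩
    · simpa using hBs
    · intro p hp
      obtain ⟨q, hq, rfl⟩ := List.mem_map.1 hp
      exact min_le_right _ _

lemma iterExpand_one_one (ps : List (List α × ℕ)) :
    iterExpand 1 1 ps = (ps.map Prod.fst).flatten := by
  simp only [iterExpand, rangeK_one_one, List.map_cons, List.map_nil, List.flatten_cons,
    List.flatten_nil, List.append_nil, iterBlock]
  congr 1
  apply List.map_congr_left
  intro p _
  simp [repList]

lemma expands_clamp {rule : Fin N → ISLPRule α N} (ok : ∀ A, (rule A).Ok d)
    {n d' : ℕ} (hpow : ∀ c, d' < c → n < 2 ^ c)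
    {A : Fin N} {w : List α} (h : ISLP.Expands rule A w) :
    w.length ≤ n → ISLP.Expands (fun B => clampRule d' (rule B)) A w := by
  induction h with
  | @term A a hA =>
    intro _
    exact ISLP.Expands.term (by simp only [hA]; rfl)
  | @pair A B C u v hA hu hv ihu ihv =>
    intro hw
    simp only [List.length_append] at hw
    exact ISLP.Expands.pair (by simp only [hA]; rfl) (ihu (by omega)) (ihv (by omega))
  | @iter A k1 k2 Bs ps hA hsnd hall ih =>
    intro hw
    have hok := ok A
    rw [hA] at hok
    obtain ⟨hk1, hk2, hBs, hcd⟩ := hok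
    have hlen : ps.length = Bs.length := by
      have := congrArg List.length hsnd; simpa using this
    -- every sub-expansion has length ≤ n
    have hsub : ∀ q ∈ Bs.zip ps, q.2.1.length ≤ n := by
      intro q hq
      have hq2 : q.2 ∈ ps := (List.of_mem_zip hq).2
      have h1 := le_length_iterExpand hq2 (mem_rangeK_self k1 k2)
      have hp1 : 1 ≤ k1 ^ q.2.2 := Nat.one_le_pow _ _ (by omega)
      calc q.2.1.length ≤ k1 ^ q.2.2 * q.2.1.length := Nat.le_mul_of_pos_left _ (by omega)
        _ ≤ (iterExpand k1 k2 ps).length := h1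
        _ ≤ n := hw
    by_cases hcase : ∀ p ∈ Bs, p.2 ≤ d'
    · -- clamping does not change this rule
      have hBs' : Bs.map (fun p => (p.1, min p.2 d')) = Bs := by
        conv_rhs => rw [← List.map_id Bs]
        apply List.map_congr_left
        intro p hp
        simp [min_eq_left (hcase p hp)]
      refine ISLP.Expands.iter (Bs := Bs) (ps := ps) ?_ hsnd ?_
      · show clampRule d' (rule A) = _
        rw [hA]; simp only [clampRule, hBs']
      · intro q hq
        exact ih q hq (hsub q hq)
    · -- some exponent exceeds d'; then k1 = k2 = 1
      push_neg at hcase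
      obtain ⟨p, hp, hpc⟩ := hcase
      obtain ⟨i, hilt, hip⟩ := List.mem_iff_getElem.1 hp
      have hilt' : i < ps.length := by omega
      have hsndi : ps[i].2 = Bs[i].2 := by
        have : (ps.map Prod.snd)[i]'(by simpa using hilt') =
            (Bs.map Prod.snd)[i]'(by simpa using hilt) := by simp only [hsnd]
        simpa using this
      have hizip : (Bs[i], ps[i]) ∈ Bs.zip ps := by
        have : (Bs.zip ps)[i]'(by simp [List.length_zip]; omega) = (Bs[i], ps[i]) := by
          simp [List.getElem_zip]
        rw [← this]
        exact List.getElem_mem _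
      have hnem : 1 ≤ ps[i].1.length := expands_length_pos ok (hall _ hizip)
      -- bound using i = max k1 k2
      have hm : max k1 k2 ≤ 1 := by
        by_contra hm
        push_neg at hm
        have h1 := le_length_iterExpand (List.getElem_mem hilt') (mem_rangeK_max k1 k2)
        have h2 : 2 ^ ps[i].2 ≤ (max k1 k2) ^ ps[i].2 :=
          Nat.pow_le_pow_left (by omega) _
        have h3 : n < 2 ^ ps[i].2 := hpow _ (by rw [hsndi, hip]; exact hpc)
        have h4 : (max k1 k2) ^ ps[i].2 ≤ (max k1 k2) ^ ps[i].2 * ps[i].1.length :=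
          Nat.le_mul_of_pos_right _ (by omega)
        omega
      have hk1' : k1 = 1 := by omega
      have hk2' : k2 = 1 := by omega
      subst hk1' hk2'
      -- use clamped ps
      have key : iterExpand 1 1 (ps.map fun q => (q.1, min q.2 d')) = iterExpand 1 1 ps := by
        rw [iterExpand_one_one, iterExpand_one_one, List.map_map]
        rfl
      rw [← key]
      refine ISLP.Expands.iter (Bs := Bs.map fun p => (p.1, min p.2 d'))
        (ps := ps.map fun q => (q.1, min q.2 d')) ?_ ?_ ?_
      · show clampRule d' (rule A) = _
        rw [hA]; rfl
      · rw [List.map_map, List.map_map]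
        show ps.map ((fun c => min c d') ∘ Prod.snd)
            = Bs.map ((fun c => min c d') ∘ Prod.snd)
        rw [← List.map_map, ← List.map_map, hsnd]
      · intro q hq
        rw [List.zip_map] at hq
        obtain ⟨r, hr, rfl⟩ := List.mem_map.1 hq
        simpa using ih r hr (hsub r hr)

end Aux

/-- If a `d`-ISLP of size `g` generates a string `T` of
length `n ≥ 2`, then some `d'`-ISLP of size at most `g` generates `T`, with
`d' ≤ log₂ n`. -/
theorem islp_degree_le_log {α : Type} [Fintype α] (d : ℕ) (G : ISLP α d)
    (T : List α) (hG : G.Generates T) (hn : 2 ≤ T.length) :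
    ∃ (d' : ℕ) (G' : ISLP α d'), (d' : ℝ) ≤ Real.logb 2 (T.length) ∧
      G'.Generates T ∧ G'.size ≤ G.size := by
  set n := T.length with hn'
  set d' := Nat.log 2 n with hd'
  refine ⟨d', ⟨G.N, fun B => clampRule d' (G.rule B), G.start,
    fun A => clampRule_ok d' (G.ok A),
    fun A B hB => G.acyclic A B (by rwa [clampRule_vars] at hB)⟩, ?_, ?_, ?_⟩
  · -- d' ≤ logb 2 n
    simpa using Real.natLog_le_logb n 2
  · -- generates
    have hpow : ∀ c, d' < c → n < 2 ^ c := by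
      intro c hc
      calc n < 2 ^ (d' + 1) := Nat.lt_pow_succ_log_self (by norm_num) n
        _ ≤ 2 ^ c := Nat.pow_le_pow_right (by norm_num) (by omega)
    exact expands_clamp G.ok hpow hG le_rfl
  · -- size
    apply le_of_eq
    unfold ISLP.size
    exact Finset.sum_congr rfl fun A _ => clampRule_size d' (G.rule A)
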